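/- There is an absolute constant C > 0 such that for all n ∈ ℕ the dispersion of the n-th Fibonacci point set satisfies disp(F_n) ≤ C / b_n. -/

import Mathlib

/-- Fibonacci numbers with `b₀ = b₁ = 1`. -/
def fibb : ℕ → ℕ
  | 0 => 1
  | 1 => 1
  | n + 2 => fibb (n + 1) + fibb n

/-- The `n`-th Fibonacci point set
`F_n = {(μ/b_n, {μ b_{n-1}/b_n}) : μ = 1, …, b_n} ⊂ [0,1)²`. -/
noncomputable def FibSet (n : ℕ) : Set (ℝ × ℝ) :=
  {p | ∃ μ : ℕ, 1 ≤ μ ∧ μ ≤ fibb n ∧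
    p = ((μ : ℝ) / (fibb n : ℝ),
         Int.fract ((μ : ℝ) * (fibb (n - 1) : ℝ) / (fibb n : ℝ)))}

/-!
Scaled by `b_n`, the points of `F_n` are `(μ, μ b_{n-1} mod b_n)`. D'Ocagne's identity gives
`b_{n-1} b_k ≡ ±b_{n-1-k} (mod b_n)`, so a greedy descent shows that every window of
`2 b_{k+1} - 1` consecutive values of `μ` contains one whose shifted residue `μ b_{n-1} - c`
drops below `b_{n-k}`. Hence an empty box of scaled width `u ∈ [2 b_{k+1}, 2 b_{k+2})` has scaled
height below `b_{n-k}`, and scaled area at most `2 b_{k+2} b_{n-k} ≤ 2 b_{n+2} ≤ 6 b_n`.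
-/

lemma fibb_add_two (n : ℕ) : fibb (n + 2) = fibb (n + 1) + fibb n := rfl

lemma fibb_eq_fib : ∀ n, fibb n = Nat.fib (n + 1)
  | 0 => rfl
  | 1 => rfl
  | n + 2 => by
    rw [fibb_add_two, fibb_eq_fib (n + 1), fibb_eq_fib n, Nat.fib_add_two (n := n + 1), add_comm]

lemma fibb_pos (n : ℕ) : 0 < fibb n := by
  rw [fibb_eq_fib]; exact Nat.fib_pos.mpr n.succ_pos

lemma fibb_mono : Monotone fibb := fun m n h => by
  simpa only [fibb_eq_fib] using Nat.fib_mono (Nat.succ_le_succ h)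

lemma fibb_mul_fibb_le (p q : ℕ) : fibb p * fibb q ≤ fibb (p + q) := by
  rw [fibb_eq_fib, fibb_eq_fib, fibb_eq_fib, Nat.fib_add p q]
  exact Nat.le_add_left _ _

lemma fibb_add_two_le_three_mul (n : ℕ) : fibb (n + 2) ≤ 3 * fibb n := by
  simp only [fibb_eq_fib, Nat.fib_add_two, show n + 2 + 1 = n + 1 + 2 by ring]
  have := Nat.fib_le_fib_succ (n := n)
  omega

/-- D'Ocagne's identity read modulo `fibb (j + k + 1)`, obtained from `Int.fib_add` at the
negative index `-(k + 1)`. -/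
lemma fibb_mul_fibb_modEq (j k : ℕ) :
    (fibb (j + k) * fibb k : ℤ) ≡ (-1) ^ k * fibb j [ZMOD fibb (j + k + 1)] := by
  have h := Int.fib_add (j + k + 2 : ℕ) (-(k + 1 : ℕ))
  rw [show ((j + k + 2 : ℕ) : ℤ) + -(k + 1 : ℕ) = (j + 1 : ℕ) by push_cast; ring,
    show ((j + k + 2 : ℕ) : ℤ) - 1 = (j + k + 1 : ℕ) by push_cast; ring,
    show -((k + 1 : ℕ) : ℤ) + 1 = -(k : ℕ) by push_cast; ring] at h
  simp only [Int.fib_neg_natCast, Int.fib_natCast] at h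
  have hsq : ((-1 : ℤ) ^ k) * (-1) ^ k = 1 := pow_mul_pow_eq_one k (by norm_num)
  simp only [fibb_eq_fib]
  refine (Int.modEq_iff_dvd.mpr ⟨Nat.fib k, ?_⟩).symm
  linear_combination -(-1) ^ k * h -
    ((Nat.fib (j + k + 1) * Nat.fib (k + 1) : ℤ) - Nat.fib (j + k + 2) * Nat.fib k) * hsq

lemma exists_abs_lt_modEq_lt_fibb (n k : ℕ) (c : ℤ) :
    ∃ δ r : ℤ, |δ| < fibb (k + 1) ∧ 0 ≤ r ∧ r < fibb (n - k) ∧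
      c + δ * fibb (n - 1) ≡ r [ZMOD fibb n] := by
  induction k with
  | zero =>
    have hN : (0 : ℤ) < fibb n := by exact_mod_cast fibb_pos n
    exact ⟨0, c % fibb n, by simp [fibb], Int.emod_nonneg _ hN.ne', Int.emod_lt_of_pos _ hN,
      by simpa using (Int.mod_modEq c _).symm⟩
  | succ k ih =>
    obtain ⟨δ, r, hδ, hr0, hr, hcong⟩ := ih
    have hk : (fibb (k + 1) : ℤ) ≤ fibb (k + 2) := by exact_mod_cast fibb_mono (by omega)
    by_cases hsmall : r < fibb (n - (k + 1))
    · exact ⟨δ, r, hδ.trans_le hk, hr0, hsmall, hcong⟩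
    obtain ⟨m, rfl⟩ : ∃ m, n = m + 1 + k + 1 := by
      refine ⟨n - k - 2, ?_⟩
      by_contra hn
      have h0 : fibb (n - (k + 1)) = 1 := by rw [show n - (k + 1) = 0 by omega]; rfl
      have h1 : fibb (n - k) ≤ 1 := fibb_mono (show n - k ≤ 1 by omega)
      omega
    rw [show m + 1 + k + 1 - (k + 1) = m + 1 by omega] at hsmall ⊢
    rw [show m + 1 + k + 1 - k = m + 2 by omega] at hr
    rw [show m + 1 + k + 1 - 1 = m + 1 + k by omega] at hcong ⊢
    -- stepping `δ` by `∓ fibb k` moves the residue down by exactly `fibb (m + 1)`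
    refine ⟨δ - (-1) ^ k * fibb k, r - fibb (m + 1), ?_, by linarith, ?_, ?_⟩
    · have hb : |(-1) ^ k * (fibb k : ℤ)| = fibb k := by simp [abs_mul]
      calc |δ - (-1) ^ k * fibb k| ≤ |δ| + fibb k := (abs_sub _ _).trans_eq (by rw [hb])
        _ < fibb (k + 1) + fibb k := by linarith
        _ = fibb (k + 2) := by rw [fibb_add_two]; push_cast; ring
    · have hm : (fibb m : ℤ) ≤ fibb (m + 1) := by exact_mod_cast fibb_mono (by omega)
      rw [fibb_add_two] at hr
      push_cast at hr
      linarith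
    · calc c + (δ - (-1) ^ k * fibb k) * fibb (m + 1 + k)
          = c + δ * fibb (m + 1 + k) - (-1) ^ k * (fibb (m + 1 + k) * fibb k) := by ring
        _ ≡ r - (-1) ^ k * ((-1) ^ k * fibb (m + 1)) [ZMOD fibb (m + 1 + k + 1)] :=
          hcong.sub ((fibb_mul_fibb_modEq (m + 1) k).mul_left _)
        _ = r - fibb (m + 1) := by
          rw [← mul_assoc, pow_mul_pow_eq_one k (by norm_num), one_mul]

lemma exists_fibb_le_lt {t : ℝ} (ht : 1 ≤ t) :
    ∃ k, (fibb (k + 1) : ℝ) ≤ t ∧ t < fibb (k + 2) := by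
  classical
  have hex : ∃ m, t < fibb (m + 2) := by
    obtain ⟨m, hm⟩ := exists_nat_gt t
    refine ⟨m, hm.trans ?_⟩
    have := Nat.le_fib_add_one (m + 3)
    rw [fibb_eq_fib]
    exact_mod_cast (by omega : m < Nat.fib (m + 3))
  refine ⟨Nat.find hex, ?_, Nat.find_spec hex⟩
  rcases h : Nat.find hex with _ | k
  · simpa [fibb] using ht
  · exact not_lt.mp (Nat.find_min hex (h ▸ k.lt_succ_self))

lemma mk_mem_fibSet {n μ : ℕ} {ρ : ℤ} (hμ : 1 ≤ μ) (hμn : μ ≤ fibb n) (hρ : 0 ≤ ρ)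
    (hρn : ρ < fibb n) (hmod : (μ * fibb (n - 1) : ℤ) ≡ ρ [ZMOD fibb n]) :
    ((μ : ℝ) / fibb n, (ρ : ℝ) / fibb n) ∈ FibSet n := by
  have hN : (0 : ℝ) < fibb n := by exact_mod_cast fibb_pos n
  obtain ⟨q, hq⟩ := Int.modEq_iff_dvd.mp hmod
  refine ⟨μ, hμ, hμn, Prod.ext rfl
    (Int.fract_eq_iff.mpr ⟨by positivity, ?_, -q, ?_⟩).symm⟩
  · rw [div_lt_one hN]; exact_mod_cast hρn
  · have hq' : (ρ : ℝ) - μ * fibb (n - 1) = fibb n * q := by exact_mod_cast hq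
    field_simp
    push_cast
    linarith

def AvoidsBox (S : Set (ℝ × ℝ)) (x y : ℝ × ℝ) : Prop :=
  ∀ p ∈ S, ¬ (x.1 ≤ p.1 ∧ p.1 < y.1 ∧ x.2 ≤ p.2 ∧ p.2 < y.2)

section EmptyBox

variable {n : ℕ} {x y : ℝ × ℝ}

lemma height_lt_of_modEq (hy1 : y.1 ≤ 1) (hx2 : 0 ≤ x.2) (hy2 : y.2 ≤ 1)
    (hempty : AvoidsBox (FibSet n) x y)
    {μ : ℤ} (hμ1 : 1 ≤ μ) (hμx : ⌈x.1 * fibb n⌉ ≤ μ) (hμy : μ < ⌈y.1 * fibb n⌉)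
    {r : ℤ} (hr : 0 ≤ r) (hmod : μ * fibb (n - 1) ≡ ⌈x.2 * fibb n⌉ + r [ZMOD fibb n]) :
    (y.2 - x.2) * fibb n < r + 1 := by
  set z := ⌈x.2 * fibb n⌉
  have hN : (0 : ℝ) < fibb n := by exact_mod_cast fibb_pos n
  have hz : 0 ≤ z := Int.ceil_nonneg (by positivity)
  lift μ to ℕ using (by omega)
  have hμx' : x.1 ≤ μ / fibb n := by rw [le_div_iff₀ hN]; exact_mod_cast Int.ceil_le.mp hμx
  have hμy' : μ / fibb n < y.1 := by rw [div_lt_iff₀ hN]; exact_mod_cast Int.lt_ceil.mp hμy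
  have hμN : μ ≤ fibb n := by
    have : (μ : ℝ) < fibb n := by rw [div_lt_iff₀ hN] at hμy'; nlinarith
    exact_mod_cast this.le
  have htop : y.2 * fibb n ≤ z + r := by
    by_cases hin : z + r < fibb n
    · have hp := mk_mem_fibSet (by omega) hμN (by omega) hin hmod
      have hρx : x.2 ≤ ((z + r : ℤ) : ℝ) / fibb n := by
        have hr' : (0 : ℝ) ≤ r := by exact_mod_cast hr
        rw [le_div_iff₀ hN]; push_cast; linarith [Int.le_ceil (x.2 * fibb n)]
      have hρy := not_lt.mp fun h => hempty _ hp ⟨hμx', hμy', hρx, h⟩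
      rw [le_div_iff₀ hN] at hρy
      exact_mod_cast hρy
    · have : (fibb n : ℝ) ≤ z + r := by exact_mod_cast not_lt.mp hin
      nlinarith
  linarith [Int.ceil_lt_add_one (x.2 * fibb n)]

lemma height_lt_fibb (hx1 : 0 ≤ x.1) (hy1 : y.1 ≤ 1) (hx2 : 0 ≤ x.2) (hy2 : y.2 ≤ 1)
    (hempty : AvoidsBox (FibSet n) x y)
    {k : ℕ} (hk : 2 * (fibb (k + 1) : ℝ) ≤ (y.1 - x.1) * fibb n) :
    (y.2 - x.2) * fibb n < fibb (n - k) := by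
  have hN : (0 : ℝ) < fibb n := by exact_mod_cast fibb_pos n
  -- `μ = 0` is not an index of `FibSet n`, hence the `max _ 1`
  set lo := max ⌈x.1 * fibb n⌉ 1
  set b : ℤ := (fibb (k + 1) : ℤ)
  set z := ⌈x.2 * fibb n⌉
  obtain ⟨δ, r, hδ, hr0, hr, hmod⟩ :=
    exists_abs_lt_modEq_lt_fibb n k ((lo + b - 1) * fibb (n - 1) - z)
  obtain ⟨hδl, hδu⟩ := abs_lt.mp hδ
  have hlo : (lo : ℝ) ≤ x.1 * fibb n + 1 := by
    push_cast [lo]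
    exact max_le (Int.ceil_lt_add_one _).le (by nlinarith)
  have hμy : lo + b - 1 + δ < ⌈y.1 * fibb n⌉ := by
    rw [Int.lt_ceil]
    have : ((lo + b - 1 + δ : ℤ) : ℝ) ≤ lo + 2 * b - 2 := by
      exact_mod_cast (by omega : lo + b - 1 + δ ≤ lo + 2 * b - 2)
    push_cast [b] at this ⊢
    linarith
  have hv := height_lt_of_modEq hy1 hx2 hy2 hempty (by omega) (by omega) hμy hr0 <| calc
    (lo + b - 1 + δ) * fibb (n - 1) = (lo + b - 1) * fibb (n - 1) - z + δ * fibb (n - 1) + z := by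
      ring
    _ ≡ r + z [ZMOD fibb n] := hmod.add_right z
    _ = z + r := add_comm r z
  have : ((r + 1 : ℤ) : ℝ) ≤ fibb (n - k) := by exact_mod_cast hr
  push_cast at this
  linarith

lemma width_mul_height_le (hx1 : 0 ≤ x.1) (hx2 : 0 ≤ x.2) (hxy2 : x.2 < y.2)
    (hy1 : y.1 ≤ 1) (hy2 : y.2 ≤ 1)
    (hempty : AvoidsBox (FibSet n) x y) :
    (y.1 - x.1) * fibb n * ((y.2 - x.2) * fibb n) ≤ 6 * fibb n := by
  have hN : (0 : ℝ) < fibb n := by exact_mod_cast fibb_pos n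
  have hu : (y.1 - x.1) * fibb n ≤ fibb n := by nlinarith
  have hv : (y.2 - x.2) * fibb n ≤ fibb n := by nlinarith
  have hv0 : 0 < (y.2 - x.2) * fibb n := by nlinarith
  by_cases hu2 : (y.1 - x.1) * fibb n < 2
  · nlinarith
  obtain ⟨k, hk1, hk2⟩ := exists_fibb_le_lt (t := (y.1 - x.1) * fibb n / 2) (by linarith)
  have hkn : k ≤ n := by
    by_contra! hkn
    have : (fibb n : ℝ) ≤ fibb (k + 1) := by exact_mod_cast fibb_mono (by omega)
    linarith
  have hfib : (fibb (k + 2) : ℝ) * fibb (n - k) ≤ 3 * fibb n := by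
    have := fibb_mul_fibb_le (k + 2) (n - k)
    rw [show k + 2 + (n - k) = n + 2 by omega] at this
    exact_mod_cast this.trans (fibb_add_two_le_three_mul n)
  have hvk := height_lt_fibb hx1 hy1 hx2 hy2 hempty (k := k) (by linarith)
  calc (y.1 - x.1) * fibb n * ((y.2 - x.2) * fibb n) ≤ (2 * fibb (k + 2)) * fibb (n - k) :=
        mul_le_mul (by linarith) hvk.le hv0.le (by positivity)
    _ ≤ 6 * fibb n := by linarith

end EmptyBox

theorem fibonacci_dispersion :
    ∃ C : ℝ, 0 < C ∧ ∀ n : ℕ, ∀ x y : ℝ × ℝ,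
      0 ≤ x.1 → 0 ≤ x.2 → x.1 < y.1 → x.2 < y.2 → y.1 ≤ 1 → y.2 ≤ 1 →
      (∀ p ∈ FibSet n, ¬ (x.1 ≤ p.1 ∧ p.1 < y.1 ∧ x.2 ≤ p.2 ∧ p.2 < y.2)) →
      (y.1 - x.1) * (y.2 - x.2) ≤ C / (fibb n : ℝ) := by
  refine ⟨6, by norm_num, fun n x y hx1 hx2 _ hxy2 hy1 hy2 hempty => ?_⟩
  have hN : (0 : ℝ) < fibb n := by exact_mod_cast fibb_pos n
  rw [le_div_iff₀ hN]
  refine le_of_mul_le_mul_right ?_ hN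
  linarith [width_mul_height_le hx1 hx2 hxy2 hy1 hy2 hempty]
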